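/- arXiv:1711.02834 — 4 statements merged into one kernel-verified Lean document; each statement's English description precedes it below -/
import Mathlib

section
/- For any nonincreasing nonnegative sequence β(k) with ∑_{k=1}^∞ k·β(k) < ∞, the normalized double sum (1/t) ∑_{i=1}^{t} ∑_{j=t+1}^{2t} β(j−i) converges to 0 as t → ∞. -/
/-!
Group the pairs `(i, j)` with `i ≤ t < j` by their lag `k = j - i`: the lag `k` occurs at most
`k` times, since `i` then lies in `[t + 1 - k, t]` and determines `j = i + k`. Hence the double
sum is at most `∑ k β k`, uniformly in `t`, and dividing by `t` sends it to `0`.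
-/

open Filter Finset

lemma card_filter_sub_eq_le {A B : Finset ℕ} {t : ℕ} (hA : ∀ i ∈ A, i ≤ t)
    (hB : ∀ j ∈ B, t < j) (k : ℕ) : #{p ∈ A ×ˢ B | p.2 - p.1 = k} ≤ k := by
  calc #{p ∈ A ×ˢ B | p.2 - p.1 = k}
      ≤ #(Icc (t + 1 - k) t) := by
        refine card_le_card_of_injOn Prod.fst (fun p hp => ?_) (fun p hp q hq hpq => ?_)
        · simp only [coe_filter, mem_product, Set.mem_ofPred_eq] at hp
          obtain ⟨⟨hi, hj⟩, hk⟩ := hp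
          have := hA _ hi; have := hB _ hj
          rw [mem_coe, mem_Icc]
          omega
        · simp only [coe_filter, mem_product, Set.mem_ofPred_eq] at hp hq
          obtain ⟨⟨hpi, hpj⟩, hpk⟩ := hp
          obtain ⟨⟨hqi, hqj⟩, hqk⟩ := hq
          have := hA _ hpi; have := hB _ hpj; have := hA _ hqi; have := hB _ hqj
          ext <;> omega
    _ ≤ k := by rw [Nat.card_Icc]; omega

lemma sum_sum_sub_le_tsum {β : ℕ → ℝ} (hβ : ∀ k, 0 ≤ β k)
    (hsum : Summable fun k : ℕ => (k : ℝ) * β k) {A B : Finset ℕ} {t : ℕ}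
    (hA : ∀ i ∈ A, i ≤ t) (hB : ∀ j ∈ B, t < j) :
    ∑ i ∈ A, ∑ j ∈ B, β (j - i) ≤ ∑' k : ℕ, (k : ℝ) * β k := by
  rw [← sum_product', sum_comp β (fun p : ℕ × ℕ => p.2 - p.1)]
  calc ∑ k ∈ (A ×ˢ B).image (fun p : ℕ × ℕ => p.2 - p.1), #{p ∈ A ×ˢ B | p.2 - p.1 = k} • β k
      ≤ ∑ k ∈ (A ×ˢ B).image (fun p : ℕ × ℕ => p.2 - p.1), (k : ℝ) * β k := by
        gcongr with k
        rw [nsmul_eq_mul]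
        gcongr
        · exact hβ k
        · exact_mod_cast card_filter_sub_eq_le hA hB k
    _ ≤ ∑' k : ℕ, (k : ℝ) * β k :=
        hsum.sum_le_tsum _ fun k _ => mul_nonneg k.cast_nonneg (hβ k)

theorem stmt_2_general (β : ℕ → ℝ) (hnonneg : ∀ k, 0 ≤ β k)
    (hsum : Summable (fun k : ℕ => (k : ℝ) * β k)) :
    Tendsto
      (fun t : ℕ =>
        (1 / (t : ℝ)) * ∑ i ∈ Finset.Icc 1 t, ∑ j ∈ Finset.Icc (t + 1) (2 * t), β (j - i))
      atTop (nhds 0) := by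
  refine squeeze_zero (fun t => ?_) (fun t => ?_)
    (tendsto_const_div_atTop_nhds_zero_nat (∑' k : ℕ, (k : ℝ) * β k))
  · exact mul_nonneg (by positivity) (sum_nonneg fun i _ => sum_nonneg fun j _ => hnonneg _)
  · rw [one_div, inv_mul_eq_div]
    gcongr
    exact sum_sum_sub_le_tsum hnonneg hsum (fun i hi => (mem_Icc.1 hi).2)
      (fun j hj => (mem_Icc.1 hj).1)

/-- For a nonincreasing nonnegative sequence `β` with `∑ k·β k < ∞`, the normalized
double sum `(1/t) ∑_{i=1}^t ∑_{j=t+1}^{2t} β (j-i)` tends to 0. -/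
theorem stmt_2 (β : ℕ → ℝ) (hnonneg : ∀ k, 0 ≤ β k) (hmono : Antitone β)
    (hsum : Summable (fun k : ℕ => (k : ℝ) * β k)) :
    Tendsto
      (fun t : ℕ =>
        (1 / (t : ℝ)) * ∑ i ∈ Finset.Icc 1 t, ∑ j ∈ Finset.Icc (t + 1) (2 * t), β (j - i))
      atTop (nhds 0) :=
  stmt_2_general β hnonneg hsum
end

section
/- Let X, Y be bounded real-valued random variables with |X| ≤ M and |Y| ≤ M almost surely. Then |Cov(X,Y)| ≤ 4 M² · β, where β is any number such that the total variation distance between the joint law of (X,Y) and the product of the marginal laws is at most β. -/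
/-!
The covariance is `∫ xy d(law of (X, Y)) - ∫ xy d(law X ⊗ law Y)`, the integral of the single
function `(x, y) ↦ xy` against the difference of two measures. Both measures live on
`[-M, M]²`, where `|xy| ≤ M²`, so the difference of integrals is at most `M²` times the total
variation of the difference of measures; this already gives the constant `M²` in place of `4M²`.
-/

open MeasureTheory

section TotalVariation

variable {α E : Type*} [MeasurableSpace α] [NormedAddCommGroup E] [NormedSpace ℝ E]

theorem norm_integral_sub_integral_le_mul_totalVariation (μ ν : Measure α)
    [IsFiniteMeasure μ] [IsFiniteMeasure ν] {f : α → E}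
    (hfμ : AEStronglyMeasurable f μ) (hfν : AEStronglyMeasurable f ν) {C : ℝ}
    (hCμ : ∀ᵐ x ∂μ, ‖f x‖ ≤ C) (hCν : ∀ᵐ x ∂ν, ‖f x‖ ≤ C) :
    ‖(∫ x, f x ∂μ) - ∫ x, f x ∂ν‖ ≤
      C * (μ.toSignedMeasure - ν.toSignedMeasure).totalVariation.real Set.univ := by
  set s := μ.toSignedMeasure - ν.toSignedMeasure
  have hdiff : (∫ x, f x ∂μ) - ∫ x, f x ∂ν = ∫ᵛ x, f x ∂<•s := by
    rw [VectorMeasure.integral_sub_vectorMeasure, VectorMeasure.integral_toSignedMeasure,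
      VectorMeasure.integral_toSignedMeasure]
    · rw [VectorMeasure.Integrable, Measure.variation_toSignedMeasure]
      exact Integrable.of_bound hfμ C hCμ
    · rw [VectorMeasure.Integrable, Measure.variation_toSignedMeasure]
      exact Integrable.of_bound hfν C hCν
  have hCs : ∀ᵐ x ∂s.variation, ‖f x‖ ≤ C := by
    refine (Measure.absolutelyContinuous_of_le VectorMeasure.variation_sub_le).ae_le ?_
    rw [Measure.variation_toSignedMeasure, Measure.variation_toSignedMeasure]
    exact ae_add_measure_iff.2 ⟨hCμ, hCν⟩
  have : IsFiniteMeasure s.variation := s.totalVariation_eq_variation ▸ inferInstance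
  have hB : ‖(ContinuousLinearMap.lsmul ℝ ℝ : ℝ →L[ℝ] E →L[ℝ] E).flip‖ ≤ 1 := by
    rw [ContinuousLinearMap.opNorm_flip]
    exact ContinuousLinearMap.opNorm_lsmul_le
  rw [hdiff, s.totalVariation_eq_variation]
  refine (VectorMeasure.norm_integral_le_of_norm_le_const hCs).trans ?_
  rcases le_or_gt 0 C with hC | hC
  · gcongr
    exact mul_le_of_le_one_right hC hB
  · have hs : s.variation = 0 := by
      rw [← Measure.measure_univ_eq_zero]
      simpa [fun x => hC.trans_le (norm_nonneg (f x))] using ae_iff.1 hCs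
    simp [hs]

end TotalVariation

section Covariance

variable {Ω : Type*} [MeasurableSpace Ω] {P : Measure Ω} [IsProbabilityMeasure P] {X Y : Ω → ℝ}

theorem abs_integral_mul_sub_mul_integral_le_mul_totalVariation
    (hX : AEMeasurable X P) (hY : AEMeasurable Y P) {MX MY : ℝ}
    (hXM : ∀ᵐ ω ∂P, |X ω| ≤ MX) (hYM : ∀ᵐ ω ∂P, |Y ω| ≤ MY) :
    |(∫ ω, X ω * Y ω ∂P) - (∫ ω, X ω ∂P) * ∫ ω, Y ω ∂P| ≤
      MX * MY * ((P.map fun ω => (X ω, Y ω)).toSignedMeasure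
        - ((P.map X).prod (P.map Y)).toSignedMeasure).totalVariation.real Set.univ := by
  have hXY : AEMeasurable (fun ω => (X ω, Y ω)) P := hX.prodMk hY
  have hmul : Measurable fun p : ℝ × ℝ => p.1 * p.2 := by fun_prop
  have hjoint : ∫ p, p.1 * p.2 ∂(P.map fun ω => (X ω, Y ω)) = ∫ ω, X ω * Y ω ∂P :=
    integral_map hXY hmul.aestronglyMeasurable
  have hprod : ∫ p, p.1 * p.2 ∂((P.map X).prod (P.map Y)) = (∫ ω, X ω ∂P) * ∫ ω, Y ω ∂P := by
    rw [integral_prod_mul (fun x => x) (fun y => y),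
      integral_map hX (f := fun x => x) (by fun_prop), integral_map hY (f := fun y => y) (by fun_prop)]
  have hXM' : ∀ᵐ x ∂P.map X, |x| ≤ MX :=
    (ae_map_iff hX (measurableSet_le (by fun_prop) measurable_const)).2 hXM
  have hYM' : ∀ᵐ y ∂P.map Y, |y| ≤ MY :=
    (ae_map_iff hY (measurableSet_le (by fun_prop) measurable_const)).2 hYM
  have hMX : 0 ≤ MX := hXM.exists.elim fun ω h => (abs_nonneg _).trans h
  have hbound {x y : ℝ} (hx : |x| ≤ MX) (hy : |y| ≤ MY) : ‖x * y‖ ≤ MX * MY := by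
    rw [Real.norm_eq_abs, abs_mul]
    exact mul_le_mul hx hy (abs_nonneg _) hMX
  have hjointM : ∀ᵐ p ∂(P.map fun ω => (X ω, Y ω)), ‖p.1 * p.2‖ ≤ MX * MY := by
    rw [ae_map_iff hXY (measurableSet_le (by fun_prop) measurable_const)]
    filter_upwards [hXM, hYM] with ω using hbound
  have hprodM : ∀ᵐ p ∂((P.map X).prod (P.map Y)), ‖p.1 * p.2‖ ≤ MX * MY := by
    filter_upwards [Measure.quasiMeasurePreserving_fst.ae hXM',
      Measure.quasiMeasurePreserving_snd.ae hYM'] with p using hbound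
  rw [← hjoint, ← hprod, ← Real.norm_eq_abs]
  exact norm_integral_sub_integral_le_mul_totalVariation _ _ hmul.aestronglyMeasurable
    hmul.aestronglyMeasurable hjointM hprodM

end Covariance

/-- Davydov-type covariance inequality for bounded random variables:
`|Cov(X,Y)| ≤ 4 M² β` whenever the total variation distance between the joint law of
`(X,Y)` and the product of the marginal laws is at most `β`. -/
theorem stmt_3 {Ω : Type*} [MeasurableSpace Ω] (P : Measure Ω) [IsProbabilityMeasure P]
    (X Y : Ω → ℝ) (hX : Measurable X) (hY : Measurable Y)
    (M : ℝ) (hXM : ∀ ω, |X ω| ≤ M) (hYM : ∀ ω, |Y ω| ≤ M)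
    (β : ℝ)
    (hβ : ((((P.map (fun ω => (X ω, Y ω))).toSignedMeasure
          - ((P.map X).prod (P.map Y)).toSignedMeasure).totalVariation) Set.univ).toReal ≤ β) :
    |(∫ ω, X ω * Y ω ∂P) - (∫ ω, X ω ∂P) * (∫ ω, Y ω ∂P)| ≤ 4 * M ^ 2 * β := by
  have hcov := abs_integral_mul_sub_mul_integral_le_mul_totalVariation hX.aemeasurable
    hY.aemeasurable (ae_of_all P hXM) (ae_of_all P hYM)
  rw [measureReal_def] at hcov
  have hβ₀ : 0 ≤ β := ENNReal.toReal_nonneg.trans hβ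
  calc _ ≤ M * M * β := hcov.trans (by gcongr; exact mul_self_nonneg M)
    _ ≤ 4 * M ^ 2 * β := by nlinarith [sq_nonneg M]
end

section
/- Pointwise convergence of a sequence of affine functions on a compact convex subset of ℝᵈ to a continuous limit implies uniform convergence on that set. -/
/-!
Let `t ⊆ K` be affinely independent with the same affine span as `K`; in finite dimension `t` is
finite. Extending `t` to an affine basis of the whole space, its barycentric coordinates `w p`,
`p ∈ t`, satisfy `f = ∑ p ∈ t, w p • f p` on `K` for every affine map `f`. So if affine maps
`fₙ → g` pointwise on `K`, then `fₙ - g = ∑ p ∈ t, w p • (fₙ p - g p)` on `K`. The weights are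
continuous, hence bounded on the compact set `K`, so convergence at the finitely many points of
`t` is uniform on `K`.
-/

open Filter Topology

section Interpolation

variable {k V P F : Type*} [Field k] [AddCommGroup V] [Module k V] [AddTorsor V P]
  [AddCommGroup F] [Module k F]

theorem AffineMap.sum_apply {ι : Type*} (s : Finset ι) (f : ι → P →ᵃ[k] F) (x : P) :
    (∑ i ∈ s, f i) x = ∑ i ∈ s, f i x := by
  classical
  induction s using Finset.induction_on with
  | empty => simp
  | insert i s hi ih => simp [Finset.sum_insert hi, ih]

theorem AffineIndependent.exists_affineMap_apply_eq_ite [DecidableEq P] {t : Set P}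
    (ht : AffineIndependent k ((↑) : t → P)) :
    ∃ w : P → P →ᵃ[k] k, ∀ p ∈ t, ∀ q ∈ t, w p q = if p = q then 1 else 0 := by
  classical
  obtain ⟨s, hts, hs, hs_top⟩ := exists_subset_affineIndependent_affineSpan_eq_top ht
  let B : AffineBasis s k P := ⟨(↑), hs, by rwa [Subtype.range_coe]⟩
  refine ⟨fun p => if hp : p ∈ s then B.coord ⟨p, hp⟩ else 0, fun p hp q hq => ?_⟩
  have hB : ∀ j, B j = j := fun _ => rfl
  simpa [hts hp, hB, Subtype.ext_iff] using B.coord_apply ⟨p, hts hp⟩ ⟨q, hts hq⟩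

theorem AffineMap.eqOn_affineSpan_sum_smul [DecidableEq P] (t : Finset P) {w : P → P →ᵃ[k] k}
    (hw : ∀ p ∈ t, ∀ q ∈ t, w p q = if p = q then 1 else 0) (f : P →ᵃ[k] F) :
    Set.EqOn f (fun x => ∑ p ∈ t, w p x • f p) (affineSpan k (t : Set P)) := by
  let g : P →ᵃ[k] F := ∑ p ∈ t, (AffineMap.lineMap 0 (f p)).comp (w p)
  have hg : ⇑g = fun x => ∑ p ∈ t, w p x • f p := by
    ext x; simp [g, AffineMap.sum_apply, AffineMap.lineMap_apply_module]
  rw [← hg]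
  refine AffineMap.eqOn_affineSpan fun q hq => ?_
  simp [hg, Finset.mem_coe.1 hq,
    Finset.sum_congr rfl fun p hp => congrArg (· • f p) (hw p hp q hq)]

theorem exists_finset_subset_forall_affineMap_eq_sum_smul [FiniteDimensional k V] (K : Set P) :
    ∃ t : Finset P, ↑t ⊆ K ∧ ∃ w : P → P →ᵃ[k] k,
      ∀ f : P →ᵃ[k] F, ∀ x ∈ K, f x = ∑ p ∈ t, w p x • f p := by
  classical
  obtain ⟨t, htK, hspan, ht⟩ := exists_affineIndependent k V K
  have : Finite t := finite_of_fin_dim_affineIndependent k ht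
  obtain ⟨w, hw⟩ := ht.exists_affineMap_apply_eq_ite
  refine ⟨t.toFinite.toFinset, by simpa using htK, w, fun f x hx => ?_⟩
  refine AffineMap.eqOn_affineSpan_sum_smul _ (by simpa using hw) f ?_
  simpa [hspan] using mem_affineSpan k hx

end Interpolation

section UniformConvergence

variable {F : Type*} [NormedAddCommGroup F] [NormedSpace ℝ F]

theorem tendstoUniformlyOn_finset_sum_smul {ι α X : Type*} [TopologicalSpace X]
    {l : Filter α} {K : Set X} (hK : IsCompact K) (s : Finset ι) {w : ι → X → ℝ}
    (hw : ∀ i ∈ s, ContinuousOn (w i) K) {c : α → ι → F} {c₀ : ι → F}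
    (hc : ∀ i ∈ s, Tendsto (fun n => c n i) l (𝓝 (c₀ i))) :
    TendstoUniformlyOn (fun n x => ∑ i ∈ s, w i x • c n i) (fun x => ∑ i ∈ s, w i x • c₀ i)
      l K := by
  obtain ⟨M, hM⟩ := hK.exists_bound_of_continuousOn
    (continuousOn_finsetSum s fun i hi => (hw i hi).abs)
  have hdist : Tendsto (fun n => M * ∑ i ∈ s, dist (c₀ i) (c n i)) l (𝓝 0) := by
    simpa using (tendsto_finsetSum s fun i hi =>
      (tendsto_const_nhds (x := c₀ i)).dist (hc i hi)).const_mul M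
  rw [Metric.tendstoUniformlyOn_iff]
  intro ε hε
  filter_upwards [hdist.eventually_lt_const hε] with n hn x hx
  have hwM : ∀ j ∈ s, |w j x| ≤ M := fun j hj =>
    (Finset.single_le_sum (fun i _ => abs_nonneg (w i x)) hj).trans
      ((le_abs_self _).trans (hM x hx))
  calc dist (∑ i ∈ s, w i x • c₀ i) (∑ i ∈ s, w i x • c n i)
      = ‖∑ i ∈ s, w i x • (c₀ i - c n i)‖ := by
        simp [dist_eq_norm, smul_sub, Finset.sum_sub_distrib]
    _ ≤ ∑ i ∈ s, |w i x| * dist (c₀ i) (c n i) := by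
        refine norm_sum_le_of_le s fun i _ => ?_
        rw [norm_smul, Real.norm_eq_abs, dist_eq_norm]
    _ ≤ ∑ i ∈ s, M * dist (c₀ i) (c n i) :=
        Finset.sum_le_sum fun i hi => mul_le_mul_of_nonneg_right (hwM i hi) dist_nonneg
    _ < ε := by rwa [← Finset.mul_sum]

theorem AffineMap.tendstoUniformlyOn_of_tendsto {E P α : Type*} [NormedAddCommGroup E]
    [NormedSpace ℝ E] [FiniteDimensional ℝ E] [MetricSpace P] [NormedAddTorsor E P]
    {l : Filter α} [l.NeBot] {K : Set P} (hK : IsCompact K) {f : α → P →ᵃ[ℝ] F} {g : P → F}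
    (hfg : ∀ x ∈ K, Tendsto (fun n => f n x) l (𝓝 (g x))) :
    TendstoUniformlyOn (fun n x => f n x) g l K := by
  obtain ⟨t, htK, w, hf⟩ :=
    exists_finset_subset_forall_affineMap_eq_sum_smul (k := ℝ) (F := F) K
  have hg : ∀ x ∈ K, g x = ∑ p ∈ t, w p x • g p := by
    intro x hx
    refine tendsto_nhds_unique (hfg x hx) ?_
    simp_rw [hf _ x hx]
    exact tendsto_finsetSum t fun p hp => (hfg p (htK hp)).const_smul (w p x)
  refine ((tendstoUniformlyOn_finset_sum_smul hK t
    (fun p _ => (w p).continuous_of_finiteDimensional.continuousOn)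
    fun p hp => hfg p (htK hp)).congr ?_).congr_right ?_
  · exact Eventually.of_forall fun n x hx => (hf (f n) x hx).symm
  · exact fun x hx => (hg x hx).symm

end UniformConvergence

theorem stmt_5_general {d : ℕ} (Θ : Set (Fin d → ℝ)) (hcomp : IsCompact Θ)
    (a : ℕ → Fin d → ℝ) (b : ℕ → ℝ) (g : (Fin d → ℝ) → ℝ)
    (hpt : ∀ θ ∈ Θ,
      Tendsto (fun n => (∑ i, a n i * θ i) + b n) atTop (nhds (g θ))) :
    TendstoUniformlyOn (fun n θ => (∑ i, a n i * θ i) + b n) g atTop Θ := by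
  let f : ℕ → (Fin d → ℝ) →ᵃ[ℝ] ℝ := fun n =>
    (∑ i, a n i • LinearMap.proj i).toAffineMap + AffineMap.const ℝ _ (b n)
  have hf : ∀ n θ, f n θ = (∑ i, a n i * θ i) + b n := fun n θ => by simp [f]
  simp_rw [← hf] at hpt ⊢
  exact AffineMap.tendstoUniformlyOn_of_tendsto hcomp hpt

/-- Pointwise convergence of affine functions on a compact convex subset of ℝᵈ to a
continuous limit implies uniform convergence on that set. -/
theorem stmt_5 {d : ℕ} (Θ : Set (Fin d → ℝ)) (hcomp : IsCompact Θ) (hconv : Convex ℝ Θ)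
    (a : ℕ → Fin d → ℝ) (b : ℕ → ℝ) (g : (Fin d → ℝ) → ℝ)
    (hg : ContinuousOn g Θ)
    (hpt : ∀ θ ∈ Θ,
      Tendsto (fun n => (∑ i, a n i * θ i) + b n) atTop (nhds (g θ))) :
    TendstoUniformlyOn (fun n θ => (∑ i, a n i * θ i) + b n) g atTop Θ :=
  stmt_5_general Θ hcomp a b g hpt
end

section
/- If f : [a₁,b₁] × ⋯ × [a_d,b_d] → ℝ is continuously differentiable with all mixed partial derivatives up to order d bounded by K, then f has finite variation in the sense of Vitali on the hyperrectangle, bounded by K·∏ᵢ(bᵢ − aᵢ). -/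
/-!
Write `Δ_s(g; x, z)` (`altSumOn s g x z`) for the alternating sum of `g` over the vertices of
the face of the box `[x, z]` spanned by the coordinates in `s`. For `j ∉ s`, `Δ_{s ∪ {j}}(g; x, z)`
is the increment of `t ↦ Δ_s(g; x, z[j ↦ t])` between `x j` and `z j`, and the derivative of this
function is `Δ_s(∂ⱼ g; x, z[j ↦ t])`. By the mean value inequality and induction on `s`, a bound
`K` on the `|s|`-th derivative of `g` gives `|Δ_s(g; x, z)| ≤ K ∏_{i ∈ s} |z i - x i|`. Applied to
every cell of a grid, the cell volumes add up to the volume of `[a, b]`.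
-/

/-- The `d`-fold alternating sum `Δ(f; x, z) = ∑_{v ⊆ {1,…,d}} (-1)^{|v|} f(x^v : z^{-v})`. -/
def altSum (d : ℕ) (f : (Fin d → ℝ) → ℝ) (x z : Fin d → ℝ) : ℝ :=
  ∑ v : Finset (Fin d), (-1 : ℝ) ^ v.card * f (fun i => if i ∈ v then x i else z i)

open Finset Function

theorem Fin.sum_univ_succ_sub_castSucc {M : Type*} [AddCommGroup M] :
    ∀ {N : ℕ} (Y : Fin (N + 1) → M),
      ∑ m : Fin N, (Y m.succ - Y m.castSucc) = Y (last N) - Y 0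
  | 0, Y => by simp
  | N + 1, Y => by
    have ih := Fin.sum_univ_succ_sub_castSucc (fun m => Y m.castSucc)
    rw [Fin.sum_univ_castSucc]
    simp only [Fin.succ_castSucc, Fin.succ_last, Fin.castSucc_zero] at ih ⊢
    rw [ih]
    abel

theorem sum_pi_prod_succ_sub_castSucc {ι R : Type*} [Fintype ι] [DecidableEq ι] [CommRing R]
    (n : ι → ℕ) (y : ∀ i, Fin (n i + 1) → R) :
    ∑ k : ∀ i, Fin (n i), ∏ i, (y i (k i).succ - y i (k i).castSucc) =
      ∏ i, (y i (Fin.last (n i)) - y i 0) := by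
  rw [← Fintype.prod_sum fun i (m : Fin (n i)) => y i m.succ - y i m.castSucc]
  exact prod_congr rfl fun i _ => Fin.sum_univ_succ_sub_castSucc (y i)

theorem norm_iteratedFDeriv_fderiv_apply_le {E F : Type*} [NormedAddCommGroup E]
    [NormedSpace ℝ E] [NormedAddCommGroup F] [NormedSpace ℝ F] {g : E → F} {n : ℕ}
    (hg : ContDiff ℝ (n + 1) g) (e w : E) :
    ‖iteratedFDeriv ℝ n (fun w => fderiv ℝ g w e) w‖ ≤
      ‖e‖ * ‖iteratedFDeriv ℝ (n + 1) g w‖ := by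
  rw [← norm_iteratedFDeriv_fderiv]
  exact norm_iteratedFDeriv_clm_apply_const (hg.fderiv_right le_rfl).contDiffAt le_rfl

section AltSumOn

variable {ι : Type*} [DecidableEq ι]

def altSumOn (s : Finset ι) (g : (ι → ℝ) → ℝ) (x z : ι → ℝ) : ℝ :=
  ∑ v ∈ s.powerset, (-1 : ℝ) ^ v.card * g (fun i => if i ∈ v then x i else z i)

theorem altSum_eq_altSumOn_univ (d : ℕ) (f : (Fin d → ℝ) → ℝ) (x z : Fin d → ℝ) :
    altSum d f x z = altSumOn univ f x z := by
  rw [altSum, altSumOn, powerset_univ]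

theorem altSumOn_empty (g : (ι → ℝ) → ℝ) (x z : ι → ℝ) :
    altSumOn ∅ g x z = g z := by
  simp [altSumOn]

theorem altSumOn_update_of_notMem {s : Finset ι} {j : ι} (hj : j ∉ s) (g : (ι → ℝ) → ℝ)
    (x z : ι → ℝ) (t : ℝ) :
    altSumOn s g x (update z j t) =
      ∑ v ∈ s.powerset,
        (-1 : ℝ) ^ v.card * g (update (fun i => if i ∈ v then x i else z i) j t) := by
  refine sum_congr rfl fun v hv => ?_
  have hjv : j ∉ v := fun h => hj (mem_powerset.1 hv h)
  congr 2
  ext i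
  by_cases hij : i = j
  · subst hij; simp [hjv]
  · simp [update_of_ne hij]

theorem altSumOn_insert {s : Finset ι} {j : ι} (hj : j ∉ s) (g : (ι → ℝ) → ℝ) (x z : ι → ℝ) :
    altSumOn (insert j s) g x z = altSumOn s g x z - altSumOn s g x (update z j (x j)) := by
  unfold altSumOn
  rw [sum_powerset_insert hj, sub_eq_add_neg, ← sum_neg_distrib]
  congr 1
  refine sum_congr rfl fun v hv => ?_
  have hjv : j ∉ v := fun h => hj (mem_powerset.1 hv h)
  have hvertex : (fun i => if i ∈ insert j v then x i else z i) =
      fun i => if i ∈ v then x i else update z j (x j) i := by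
    ext i
    by_cases hij : i = j
    · subst hij; simp [hjv]
    · simp [hij]
  rw [card_insert_of_notMem hjv, pow_succ, hvertex]
  ring

theorem hasDerivAt_altSumOn_update [Fintype ι] {s : Finset ι} {j : ι} (hj : j ∉ s)
    {g : (ι → ℝ) → ℝ} (hg : Differentiable ℝ g) (x z : ι → ℝ) (t : ℝ) :
    HasDerivAt (fun t => altSumOn s g x (update z j t))
      (altSumOn s (fun w => fderiv ℝ g w (Pi.single j 1)) x (update z j t)) t := by
  simp only [altSumOn_update_of_notMem hj]
  exact HasDerivAt.fun_sum fun v _ => ((hg _).hasFDerivAt.comp_hasDerivAt t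
    (hasDerivAt_update _ j t)).const_mul _

theorem abs_altSumOn_le [Fintype ι] (s : Finset ι) {g : (ι → ℝ) → ℝ} {K : ℝ}
    (hg : ContDiff ℝ s.card g) (hK : ∀ w, ‖iteratedFDeriv ℝ s.card g w‖ ≤ K) (x z : ι → ℝ) :
    |altSumOn s g x z| ≤ K * ∏ i ∈ s, |z i - x i| := by
  induction s using Finset.induction_on generalizing g z with
  | empty =>
    have hz := hK z
    rw [card_empty, norm_iteratedFDeriv_zero] at hz
    simpa [altSumOn_empty] using hz
  | @insert j s hj ih =>
    rw [card_insert_of_notMem hj] at hg hK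
    have hg' : ContDiff ℝ (s.card + 1) g := by exact_mod_cast hg
    set h : (ι → ℝ) → ℝ := fun w => fderiv ℝ g w (Pi.single j 1)
    have hh : ContDiff ℝ s.card h := (hg'.fderiv_right le_rfl).clm_apply contDiff_const
    have hhK : ∀ w, ‖iteratedFDeriv ℝ s.card h w‖ ≤ K := fun w => by
      have hw := norm_iteratedFDeriv_fderiv_apply_le hg' (Pi.single j 1) w
      rw [Pi.norm_single, norm_one, one_mul] at hw
      exact hw.trans (hK w)
    have hderiv := hasDerivAt_altSumOn_update hj (hg'.differentiable (by simp)) x z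
    have hbound (t : ℝ) : ‖altSumOn s h x (update z j t)‖ ≤ K * ∏ i ∈ s, |z i - x i| := by
      rw [Real.norm_eq_abs]
      convert ih hh hhK (update z j t) using 3 with i hi
      rw [update_of_ne (ne_of_mem_of_not_mem hi hj)]
    have hmvt := convex_univ.norm_image_sub_le_of_norm_hasDerivWithin_le
      (fun t _ => (hderiv t).hasDerivWithinAt) (fun t _ => hbound t)
      (Set.mem_univ (x j)) (Set.mem_univ (z j))
    simp only [update_eq_self, Real.norm_eq_abs] at hmvt
    rw [altSumOn_insert hj, prod_insert hj]
    exact hmvt.trans_eq (by ring)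

end AltSumOn

theorem stmt_12_general (d : ℕ) (a b : Fin d → ℝ) (K : ℝ)
    (f : (Fin d → ℝ) → ℝ) (hf : ContDiff ℝ d f)
    (hbound : ∀ (x : Fin d → ℝ) (n : ℕ), n ≤ d → ‖iteratedFDeriv ℝ n f x‖ ≤ K) :
    ∀ (n : Fin d → ℕ) (y : ∀ i, Fin (n i + 1) → ℝ),
      (∀ i, Monotone (y i)) → (∀ i, y i 0 = a i) → (∀ i, y i (Fin.last (n i)) = b i) →
      ∑ k : (∀ i, Fin (n i)),
          |altSum d f (fun i => y i (k i).castSucc) (fun i => y i (k i).succ)|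
        ≤ K * ∏ i, (b i - a i) := by
  intro n y hmono hy0 hylast
  have hcell : ∀ k : ∀ i, Fin (n i),
      |altSum d f (fun i => y i (k i).castSucc) (fun i => y i (k i).succ)| ≤
        K * ∏ i, (y i (k i).succ - y i (k i).castSucc) := fun k => by
    rw [altSum_eq_altSumOn_univ]
    have hcard : (univ : Finset (Fin d)).card = d := card_fin d
    convert abs_altSumOn_le univ (by rwa [hcard])
      (fun w => by rw [hcard]; exact hbound w d le_rfl)
      (fun i => y i (k i).castSucc) (fun i => y i (k i).succ) using 3 with i
    exact (abs_of_nonneg (sub_nonneg.2 (hmono i (Fin.castSucc_le_succ _)))).symm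
  calc _ ≤ ∑ k : ∀ i, Fin (n i), K * ∏ i, (y i (k i).succ - y i (k i).castSucc) :=
        sum_le_sum fun k _ => hcell k
    _ = K * ∏ i, (b i - a i) := by
        rw [← mul_sum, sum_pi_prod_succ_sub_castSucc]
        simp only [hylast, hy0]

/-- If `f` is `C^d` on `ℝᵈ` with all iterated derivatives of order up to `d` bounded
by `K`, then `f` has Vitali variation on the hyperrectangle `[a,b]` at most
`K ∏ᵢ (bᵢ - aᵢ)`: every grid sum of absolute alternating sums obeys this bound. -/
theorem stmt_12 (d : ℕ) (a b : Fin d → ℝ) (hab : ∀ i, a i ≤ b i) (K : ℝ)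
    (f : (Fin d → ℝ) → ℝ) (hf : ContDiff ℝ d f)
    (hbound : ∀ (x : Fin d → ℝ) (n : ℕ), n ≤ d → ‖iteratedFDeriv ℝ n f x‖ ≤ K) :
    ∀ (n : Fin d → ℕ) (y : ∀ i, Fin (n i + 1) → ℝ),
      (∀ i, Monotone (y i)) → (∀ i, y i 0 = a i) → (∀ i, y i (Fin.last (n i)) = b i) →
      ∑ k : (∀ i, Fin (n i)),
          |altSum d f (fun i => y i (k i).castSucc) (fun i => y i (k i).succ)|
        ≤ K * ∏ i, (b i - a i) :=
  stmt_12_general d a b K f hf hbound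
end
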